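/- arXiv:1707.09781 — 5 statements merged into one kernel-verified Lean document; each statement's English description precedes it below -/
import Mathlib

section
/- Let (G, Σ, π) be a spinal graph. For each x ∈ Σ, the full subgraph of G induced by π⁻¹(x) is connected. -/
/-- A walk `w` from `a` to `b` contains a (contiguous) subpath from `u` to `v`. -/
def ContainsSubpath {V : Type*} (G : SimpleGraph V) {a b : V} (w : G.Walk a b) (u v : V) : Prop :=
  ∃ (p : G.Walk a u) (q : G.Walk u v) (r : G.Walk v b), w = p.append (q.append r)

/-- `(G, S, π)` is a spinal graph. -/
structure IsSpinal {V : Type*} (G : SimpleGraph V) (S : Set V) (π : V → V) : Prop where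
  connected : G.Connected
  mem_spine : ∀ x, π x ∈ S
  proj_fixed : ∀ x ∈ S, π x = x
  fibre_finite : ∀ x, (π ⁻¹' {x}).Finite
  path_through : ∀ (a b : V) (w : G.Walk a b), π a ≠ π b →
    ContainsSubpath G w (π a) (π b)


theorem stmt_2 {V : Type*} (G : SimpleGraph V) (S : Set V) (π : V → V)
    (hsp : IsSpinal G S π) (x : V) (hx : x ∈ S) :
    (G.induce (π ⁻¹' {x})).Connected := by
  classical
  have hπx : π x = x := hsp.proj_fixed x hx
  -- lifting walks staying in the fibre
  have lift : ∀ (a b : V) (w : G.Walk a b) (h : ∀ c ∈ w.support, π c = x),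
      (G.induce (π ⁻¹' {x})).Reachable
        ⟨a, h a w.start_mem_support⟩ ⟨b, h b w.end_mem_support⟩ := by
    intro a b w
    induction w with
    | nil => intro h; exact SimpleGraph.Reachable.refl _
    | @cons a c b hadj w ih =>
      intro h
      have ha : π a = x := h a (by simp)
      have hc : π c = x := h c (by simp)
      have hrest : ∀ d ∈ w.support, π d = x := fun d hd => h d (by simp [hd])
      have hadj' : (G.induce (π ⁻¹' {x})).Adj ⟨a, ha⟩ ⟨c, hc⟩ := by
        simp [SimpleGraph.comap, hadj]
      exact (hadj'.reachable).trans (ih hrest)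
  have key : ∀ n : ℕ, ∀ a b : V, ∀ w : G.Walk a b, w.length ≤ n →
      ∀ (ha : π a = x) (hb : π b = x),
      (G.induce (π ⁻¹' {x})).Reachable ⟨a, ha⟩ ⟨b, hb⟩ := by
    intro n
    induction n with
    | zero =>
      intro a b w hw ha hb
      have : a = b := SimpleGraph.Walk.eq_of_length_eq_zero (Nat.le_zero.mp hw)
      subst this
      exact SimpleGraph.Reachable.refl _
    | succ n ih =>
      intro a b w hw ha hb
      by_cases hall : ∀ c ∈ w.support, π c = x
      · exact lift a b w hall
      · push_neg at hall
        obtain ⟨c, hc, hπc⟩ := hall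
        have h1 := hsp.path_through a c (w.takeUntil c hc)
          (by rw [ha]; exact fun h => hπc h.symm)
        rw [ha] at h1
        obtain ⟨p, q, r, hpq⟩ := h1
        have h2 := hsp.path_through b c (w.dropUntil c hc).reverse
          (by rw [hb]; exact fun h => hπc h.symm)
        rw [hb] at h2
        obtain ⟨p', q', r', hpq'⟩ := h2
        have hq : 1 ≤ q.length := by
          rcases Nat.eq_zero_or_pos q.length with h0 | h0
          · exact absurd (SimpleGraph.Walk.eq_of_length_eq_zero h0).symm hπc
          · exact h0
        have hq' : 1 ≤ q'.length := by
          rcases Nat.eq_zero_or_pos q'.length with h0 | h0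
          · exact absurd (SimpleGraph.Walk.eq_of_length_eq_zero h0).symm hπc
          · exact h0
        have hlen1 : (w.takeUntil c hc).length ≤ n + 1 :=
          le_trans (SimpleGraph.Walk.length_takeUntil_le w hc) hw
        have hlen2 : (w.dropUntil c hc).length ≤ n + 1 :=
          le_trans (SimpleGraph.Walk.length_dropUntil_le w hc) hw
        have hp : p.length ≤ n := by
          have := congrArg SimpleGraph.Walk.length hpq
          simp [SimpleGraph.Walk.length_append] at this
          omega
        have hp' : p'.length ≤ n := by
          have := congrArg SimpleGraph.Walk.length hpq'
          simp [SimpleGraph.Walk.length_append] at this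
          omega
        exact (ih a x p hp ha hπx).trans (ih b x p' hp' hb hπx).symm
  have : Nonempty ↑(π ⁻¹' {x}) := ⟨⟨x, by simp [hπx]⟩⟩
  refine ⟨?_⟩
  rintro ⟨a, ha⟩ ⟨b, hb⟩
  obtain ⟨w⟩ := hsp.connected.preconnected a b
  exact key w.length a b w le_rfl ha hb
end

section
/- Every spinal graph (G, Σ, π) is isomorphic to a graph obtained by the gluing construction: letting Γ be the full subgraph induced by Σ and G_x the full subgraph induced by π⁻¹(x) for each x ∈ Σ, the map φ(a) = (π(a), a) is a graph isomorphism from G onto the graph on ⊔_{x∈Σ} V(G_x) where (x₁,y₁) ~ (x₂,y₂) iff either x₁ = x₂ and y₁ ~ y₂ in G_{x₁}, or y₁ = x₁, y₂ = x₂ and x₁ ~ x₂ in Γ. -/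
/-- The graph obtained by the gluing construction: vertices are pairs `(x, y)` with
`π y = x` (i.e. `y` a vertex of the fibre graph `G_x`), and `(x₁,y₁) ~ (x₂,y₂)` iff
either `x₁ = x₂` and `y₁ ~ y₂` in `G_{x₁}` (the induced subgraph on the fibre), or
`y₁ = x₁`, `y₂ = x₂` and `x₁ ~ x₂` in `Γ` (the induced subgraph on the spine). -/
def GluedGraph {V : Type*} (G : SimpleGraph V) (π : V → V) :
    SimpleGraph {p : V × V // π p.2 = p.1} :=
  SimpleGraph.fromRel (fun p q =>
    (p.val.1 = q.val.1 ∧ G.Adj p.val.2 q.val.2) ∨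
    (p.val.2 = p.val.1 ∧ q.val.2 = q.val.1 ∧ G.Adj p.val.1 q.val.1))

theorem stmt_3 {V : Type*} (G : SimpleGraph V) (S : Set V) (π : V → V)
    (hsp : IsSpinal G S π) :
    ∃ φ : G ≃g GluedGraph G π, ∀ a : V, (φ a : V × V) = (π a, a) := by
  have key : ∀ a b : V, G.Adj a b → π a ≠ π b →
      π a = a ∧ π b = b ∧ G.Adj (π a) (π b) := by
    intro a b hab hne
    obtain ⟨p, q, r, hw⟩ := hsp.path_through a b hab.toWalk hne
    have hlen : p.length + (q.length + r.length) = 1 := by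
      have := congrArg SimpleGraph.Walk.length hw
      simpa [SimpleGraph.Walk.length_append] using this.symm
    have hq : 1 ≤ q.length := by
      rcases Nat.eq_zero_or_pos q.length with h | h
      · exact absurd (SimpleGraph.Walk.eq_of_length_eq_zero h) hne
      · exact h
    have hp : p.length = 0 := by omega
    have hr : r.length = 0 := by omega
    have hq1 : q.length = 1 := by omega
    refine ⟨(SimpleGraph.Walk.eq_of_length_eq_zero hp).symm,
      SimpleGraph.Walk.eq_of_length_eq_zero hr, ?_⟩
    have hnn : ¬ q.Nil := by
      intro h
      rw [SimpleGraph.Walk.nil_iff_length_eq] at h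
      omega
    obtain ⟨u, h, q', rfl⟩ := (SimpleGraph.Walk.not_nil_iff).mp hnn
    have : q'.length = 0 := by simpa using hq1
    have he := SimpleGraph.Walk.eq_of_length_eq_zero this
    subst he
    exact h
  refine ⟨⟨⟨fun a => ⟨(π a, a), rfl⟩, fun p => p.val.2, fun a => rfl,
    fun p => Subtype.ext (Prod.ext p.2 rfl)⟩, ?_⟩, fun a => rfl⟩
  intro a b
  simp only [Equiv.coe_fn_mk, GluedGraph, SimpleGraph.fromRel_adj]
  constructor
  · rintro ⟨hne, (⟨h1, h2⟩ | ⟨h1, h2, h3⟩) | (⟨h1, h2⟩ | ⟨h1, h2, h3⟩)⟩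
    · exact h2
    · rw [h1, h2]; exact h3
    · exact h2.symm
    · rw [h2, h1]; exact h3.symm
  · intro hab
    refine ⟨fun h => hab.ne (congrArg (fun p : {p : V × V // π p.2 = p.1} => p.val.2) h), ?_⟩
    by_cases hpi : π a = π b
    · exact Or.inl (Or.inl ⟨hpi, hab⟩)
    · obtain ⟨h1, h2, h3⟩ := key a b hab hpi
      exact Or.inl (Or.inr ⟨h1.symm, h2.symm, h3⟩)
end

section
/- Let (G, Σ, π) be a spinal graph and let Γ be the full subgraph induced by Σ. Then Γ is connected. -/
theorem stmt_6 {V : Type*} (G : SimpleGraph V) (S : Set V) (π : V → V)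
    (hsp : IsSpinal G S π) :
    (G.induce S).Connected := by
  have key : ∀ ⦃a b : V⦄ (w : G.Walk a b),
      (G.induce S).Reachable ⟨π a, hsp.mem_spine a⟩ ⟨π b, hsp.mem_spine b⟩ := by
    intro a b w
    induction w with
    | nil => exact SimpleGraph.Reachable.refl _
    | @cons a c b h w ih =>
      refine SimpleGraph.Reachable.trans ?_ ih
      by_cases hac : π a = π c
      · have : (⟨π a, hsp.mem_spine a⟩ : S) = ⟨π c, hsp.mem_spine c⟩ := Subtype.ext hac
        rw [this]
      · obtain ⟨p, q, r, hw⟩ := hsp.path_through a c (SimpleGraph.Walk.cons h .nil) hac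
        have hlen : p.length + (q.length + r.length) = 1 := by
          have := congrArg SimpleGraph.Walk.length hw
          simpa using this.symm
        have hq1 : q.length ≠ 0 := by
          intro h0
          exact hac ((SimpleGraph.Walk.eq_of_length_eq_zero h0))
        have hq : q.length = 1 := by omega
        have hadj : G.Adj (π a) (π c) := SimpleGraph.Walk.adj_of_length_eq_one hq
        exact SimpleGraph.Adj.reachable (by exact hadj)
  have hS : S.Nonempty := by
    obtain ⟨v⟩ := hsp.connected.nonempty
    exact ⟨π v, hsp.mem_spine v⟩
  rw [SimpleGraph.connected_iff]
  refine ⟨fun u v => ?_, ⟨⟨hS.choose, hS.choose_spec⟩⟩⟩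
  obtain ⟨w⟩ := hsp.connected.preconnected u v
  have := key w
  have hu : π (u : V) = u := hsp.proj_fixed u u.2
  have hv : π (v : V) = v := hsp.proj_fixed v v.2
  convert this using 2 <;> simp [hu, hv]
end

section
/- Let (G, Σ, π) be a spinal graph with dimensions (δ_Σ, δ_G): there exist x₀ ∈ Σ, an increasing sequence (n_k) of naturals, and constants such that |D(x₀,2n_k)| ≲ |D(x₀,n_k)|, |B_Σ(x₀,2n_k)| ≲ n_k^{δ_Σ}, and |D(x₀,n_k)| ≃ n_k^{δ_G}. Suppose G satisfies S(p,β) for some p > 1 and β > 0. Then (δ_G − δ_Σ)/p − δ_G/β ≤ −1. -/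
/-- The spinal distance `[x,y] = d_Σ(π x, π y)`, where `d_Σ` is the combinatorial
distance in the full subgraph of `G` induced by the spine `S`. -/
noncomputable def spinalDist {V : Type*} (G : SimpleGraph V) (S : Set V) (π : V → V)
    (hm : ∀ x, π x ∈ S) (x y : V) : ℕ :=
  (G.induce S).dist ⟨π x, hm x⟩ ⟨π y, hm y⟩


lemma adj_dichotomy {V : Type*} {G : SimpleGraph V} {S : Set V} {π : V → V} (h : IsSpinal G S π)
    {x y : V} (hxy : G.Adj x y) :
    π x = π y ∨ (π x = x ∧ π y = y ∧ (G.induce S).Adj ⟨π x, h.mem_spine x⟩ ⟨π y, h.mem_spine y⟩) := by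
  by_cases hpq : π x = π y
  · exact Or.inl hpq
  right
  obtain ⟨pw, q, r, hw⟩ := h.path_through x y hxy.toWalk hpq
  have hlen : pw.length + (q.length + r.length) = 1 := by
    have := congrArg SimpleGraph.Walk.length hw
    simpa [SimpleGraph.Walk.length_append] using this.symm
  have hq0 : q.length ≠ 0 := fun h0 => hpq (SimpleGraph.Walk.eq_of_length_eq_zero h0)
  have hp0 : pw.length = 0 := by omega
  have hr0 : r.length = 0 := by omega
  have hq1 : q.length = 1 := by omega
  have hx : x = π x := SimpleGraph.Walk.eq_of_length_eq_zero hp0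
  have hy : π y = y := SimpleGraph.Walk.eq_of_length_eq_zero hr0
  refine ⟨hx.symm, hy, ?_⟩
  have hadj : G.Adj (π x) (π y) := SimpleGraph.Walk.adj_of_length_eq_one hq1
  exact hadj

/-- Lipschitz of dist to base along adjacency in a graph (with junk value convention). -/
lemma dist_lip {W : Type*} {H : SimpleGraph W} {u v b : W} (huv : H.Adj u v) :
    H.dist u b ≤ H.dist v b + 1 := by
  by_cases hr : H.Reachable v b
  · obtain ⟨q, hq⟩ := hr.exists_walk_length_eq_dist
    calc H.dist u b ≤ (SimpleGraph.Walk.cons huv q).length := SimpleGraph.dist_le _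
    _ = H.dist v b + 1 := by simp [SimpleGraph.Walk.length_cons, hq]
  · have : ¬ H.Reachable u b := fun h => hr ((huv.symm.reachable).trans h)
    simp [SimpleGraph.dist_eq_zero_of_not_reachable this]

lemma spinal_proj_eq {V : Type*} {G : SimpleGraph V} {S : Set V} {π : V → V}
    (h : IsSpinal G S π) (x₀ : V) {x y : V} (hxy : π x = π y) :
    spinalDist G S π h.mem_spine x x₀ = spinalDist G S π h.mem_spine y x₀ := by
  unfold spinalDist
  congr 1
  exact Subtype.ext hxy

lemma spinal_lip {V : Type*} {G : SimpleGraph V} {S : Set V} {π : V → V}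
    (h : IsSpinal G S π) (x₀ : V) {x y : V} (hxy : G.Adj x y) :
    spinalDist G S π h.mem_spine y x₀ ≤ spinalDist G S π h.mem_spine x x₀ + 1 := by
  rcases adj_dichotomy h hxy with hpq | ⟨_, _, hadj⟩
  · rw [spinal_proj_eq h x₀ hpq.symm]
    omega
  · exact dist_lip hadj.symm

theorem stmt_13 {V : Type*} (G : SimpleGraph V) (S : Set V) (π : V → V)
    (hsp : IsSpinal G S π) [G.LocallyFinite]
    (dS dG : ℝ) (hdS : 1 ≤ dS) (hdG : 1 ≤ dG)
    -- the spinal graph has dimensions (dS, dG):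
    (x₀ : V) (hx₀ : x₀ ∈ S) (nk : ℕ → ℕ) (hnk : StrictMono nk)
    (c₁ c₂ c₃ c₄ : ℝ) (hc₁ : 0 < c₁) (hc₂ : 0 < c₂) (hc₃ : 0 < c₃) (hc₄ : 0 < c₄)
    (hdoub : ∀ k, (({y : V | spinalDist G S π hsp.mem_spine y x₀ ≤ 2 * nk k}.ncard : ℝ)) ≤
      c₁ * ({y : V | spinalDist G S π hsp.mem_spine y x₀ ≤ nk k}.ncard : ℝ))
    (hspine : ∀ k,
      (({s : V | s ∈ S ∧ spinalDist G S π hsp.mem_spine s x₀ ≤ 2 * nk k}.ncard : ℝ)) ≤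
        c₂ * (nk k : ℝ) ^ dS)
    (hvol : ∀ k,
      c₃ * (nk k : ℝ) ^ dG ≤
          (({y : V | spinalDist G S π hsp.mem_spine y x₀ ≤ nk k}.ncard : ℝ)) ∧
        (({y : V | spinalDist G S π hsp.mem_spine y x₀ ≤ nk k}.ncard : ℝ)) ≤
          c₄ * (nk k : ℝ) ^ dG)
    -- G satisfies the Nash-type inequality S(p, β):
    (p β K : ℝ) (hp : 1 < p) (hβ : 0 < β) (hK : 0 < K)
    (hNash : ∀ f : V → ℂ, (Function.support f).Finite →
      ((∑' x, ‖f x‖ ^ p) ^ (1 / p)) ^ (1 + (p / (p - 1)) / β) ≤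
        K * (∑' x, ‖f x‖) ^ ((p / (p - 1)) / β) *
          (∑' x, (Real.sqrt ((2 * (G.degree x) : ℝ)⁻¹ *
            ∑ y ∈ G.neighborFinset x, ‖f y - f x‖ ^ 2)) ^ p) ^ (1 / p)) :
    (dG - dS) / p - dG / β ≤ -1 := by
  classical
  set d : V → ℕ := fun y => spinalDist G S π hsp.mem_spine y x₀ with hdDef
  have hp0 : (0:ℝ) < p := by linarith
  have hp1 : (0:ℝ) < p - 1 := by linarith
  have hp'pos : 0 < (p / (p - 1)) / β := by positivity
  set e₁ : ℝ := 1 + (p / (p - 1)) / β with he₁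
  set e₂ : ℝ := (p / (p - 1)) / β with he₂
  have he₁pos : 0 < e₁ := by positivity
  -- target exponents and constants
  set A : ℝ := ((dG + p) * (1/p)) * e₁ with hA
  set B : ℝ := (1 + dG) * e₂ + dS * (1/p) with hB
  set C₅ : ℝ := (c₃ ^ (1/p)) ^ e₁ with hC₅
  set C₆ : ℝ := K * (2 * (c₁ * c₄)) ^ e₂ * c₂ ^ (1/p) with hC₆
  have hC₅pos : 0 < C₅ := by
    have : 0 < c₃ ^ (1/p) := Real.rpow_pos_of_pos hc₃ _
    exact Real.rpow_pos_of_pos this _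
  have hC₆pos : 0 < C₆ := by
    have h1 : (0:ℝ) < 2 * (c₁ * c₄) := by positivity
    have := Real.rpow_pos_of_pos h1 e₂
    have := Real.rpow_pos_of_pos hc₂ (1/p)
    positivity
  -- the key inequality for each k with nk k ≥ 1
  have key : ∀ k : ℕ, 1 ≤ nk k → C₅ * (nk k : ℝ) ^ A ≤ C₆ * (nk k : ℝ) ^ B := by
    intro k hn1
    set n : ℕ := nk k with hndef
    have hnR : (1:ℝ) ≤ (n:ℝ) := by exact_mod_cast hn1
    have hnpos : (0:ℝ) < (n:ℝ) := by linarith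
    -- finiteness of the ball of radius 2n
    have hfin2 : ({y : V | d y ≤ 2 * n}).Finite := by
      set k' : ℕ := 2 * n with hk'
      have hle : 2 * n ≤ nk k' := hnk.le_apply
      have hsub : {y : V | d y ≤ 2 * n} ⊆ {y : V | d y ≤ nk k'} :=
        fun y hy => le_trans hy hle
      have hfin' : ({y : V | d y ≤ nk k'}).Finite := by
        by_contra hinf
        have h0 : ({y : V | d y ≤ nk k'}).ncard = 0 := Set.Infinite.ncard hinf
        have hlow := (hvol k').1
        have h0' : ({y : V | spinalDist G S π hsp.mem_spine y x₀ ≤ nk k'}).ncard = 0 := h0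
        rw [h0'] at hlow
        have hpos' : (0:ℝ) < (nk k' : ℝ) := by
          have : 1 ≤ nk k' := le_trans (by omega) hle
          exact_mod_cast this
        have : (0:ℝ) < c₃ * (nk k' : ℝ) ^ dG := by positivity
        simp only [Nat.cast_zero] at hlow
        linarith
      exact hfin'.subset hsub
    have hfin1 : ({y : V | d y ≤ n}).Finite :=
      hfin2.subset (fun y hy => by simp only [Set.mem_setOf_eq] at *; omega)
    -- the test function
    set f : V → ℂ := fun x => ((2 * n - d x : ℕ) : ℂ) with hfdef
    have hnormf : ∀ x, ‖f x‖ = ((2 * n - d x : ℕ) : ℝ) := by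
      intro x; simp [hfdef]
    have hsupp : (Function.support f).Finite := by
      apply hfin2.subset
      intro x hx
      simp only [Function.mem_support, hfdef] at hx
      simp only [Set.mem_setOf_eq]
      by_contra hc
      push_neg at hc
      have : 2 * n - d x = 0 := by omega
      simp [this] at hx
    set T2 : Finset V := hfin2.toFinset with hT2
    set T1 : Finset V := hfin1.toFinset with hT1
    have hT1sub : T1 ⊆ T2 := by
      intro x hx
      simp only [hT1, hT2, Set.Finite.mem_toFinset, Set.mem_setOf_eq] at *
      omega
    have hmemT2 : ∀ x, x ∈ T2 ↔ d x ≤ 2 * n := by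
      intro x; simp [hT2]
    have hmemT1 : ∀ x, x ∈ T1 ↔ d x ≤ n := by
      intro x; simp [hT1]
    -- Lipschitz property of d
    have hlip : ∀ x y : V, G.Adj x y → d y ≤ d x + 1 := fun x y h => spinal_lip hsp x₀ h
    -- ### the ℓ^p norm, lower bound
    have hpow_sum : (∑' x, ‖f x‖ ^ p) = ∑ x ∈ T2, ‖f x‖ ^ p := by
      apply tsum_eq_sum
      intro x hx
      rw [hmemT2] at hx
      push_neg at hx
      have : 2 * n - d x = 0 := by omega
      rw [hnormf, this]
      simp
      exact Real.zero_rpow (ne_of_gt hp0)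
    have hlow1 : c₃ * (n:ℝ) ^ dG * (n:ℝ) ^ p ≤ ∑ x ∈ T2, ‖f x‖ ^ p := by
      have hstep1 : ∀ x ∈ T1, (n:ℝ) ^ p ≤ ‖f x‖ ^ p := by
        intro x hx
        rw [hmemT1] at hx
        apply Real.rpow_le_rpow (by positivity) _ (le_of_lt hp0)
        rw [hnormf]
        exact_mod_cast (by omega : n ≤ 2 * n - d x)
      have hsum1 : (T1.card : ℝ) * (n:ℝ) ^ p ≤ ∑ x ∈ T1, ‖f x‖ ^ p := by
        calc (T1.card : ℝ) * (n:ℝ) ^ p = ∑ _x ∈ T1, (n:ℝ) ^ p := by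
              rw [Finset.sum_const, nsmul_eq_mul]
        _ ≤ ∑ x ∈ T1, ‖f x‖ ^ p := Finset.sum_le_sum hstep1
      have hsum2 : ∑ x ∈ T1, ‖f x‖ ^ p ≤ ∑ x ∈ T2, ‖f x‖ ^ p := by
        apply Finset.sum_le_sum_of_subset_of_nonneg hT1sub
        intro x _ _
        positivity
      have hcard : ({y : V | d y ≤ n}).ncard = T1.card :=
        Set.ncard_eq_toFinset_card _ hfin1
      have hlowvol : c₃ * (n:ℝ) ^ dG ≤ (T1.card : ℝ) := by
        have h := (hvol k).1
        have hcard' : ({y : V | spinalDist G S π hsp.mem_spine y x₀ ≤ nk k}).ncard = T1.card := hcard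
        rw [hcard'] at h
        exact h
      calc c₃ * (n:ℝ) ^ dG * (n:ℝ) ^ p ≤ (T1.card : ℝ) * (n:ℝ) ^ p := by
            apply mul_le_mul_of_nonneg_right hlowvol (by positivity)
      _ ≤ ∑ x ∈ T1, ‖f x‖ ^ p := hsum1
      _ ≤ ∑ x ∈ T2, ‖f x‖ ^ p := hsum2
    -- ### the ℓ¹ norm, upper bound
    have hone_sum : (∑' x, ‖f x‖) = ∑ x ∈ T2, ‖f x‖ := by
      apply tsum_eq_sum
      intro x hx
      rw [hmemT2] at hx
      push_neg at hx
      have : 2 * n - d x = 0 := by omega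
      rw [hnormf, this]; simp
    have hup2 : ∑ x ∈ T2, ‖f x‖ ≤ (2 * (c₁ * c₄)) * (n:ℝ) ^ (1 + dG) := by
      have hterm : ∀ x ∈ T2, ‖f x‖ ≤ 2 * (n:ℝ) := by
        intro x _
        rw [hnormf]
        exact_mod_cast (by omega : 2 * n - d x ≤ 2 * n)
      have hcard : ({y : V | d y ≤ 2 * n}).ncard = T2.card :=
        Set.ncard_eq_toFinset_card _ hfin2
      have hup : (T2.card : ℝ) ≤ c₁ * (c₄ * (n:ℝ) ^ dG) := by
        have h1 := hdoub k
        have h2 := (hvol k).2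
        have hcard' : ({y : V | spinalDist G S π hsp.mem_spine y x₀ ≤ 2 * nk k}).ncard = T2.card := hcard
        rw [hcard'] at h1
        calc (T2.card : ℝ) ≤ c₁ * (({y : V | spinalDist G S π hsp.mem_spine y x₀ ≤ nk k}).ncard : ℝ) := h1
        _ ≤ c₁ * (c₄ * (n:ℝ) ^ dG) := by
            apply mul_le_mul_of_nonneg_left _ (le_of_lt hc₁)
            exact h2
      calc ∑ x ∈ T2, ‖f x‖ ≤ ∑ _x ∈ T2, 2 * (n:ℝ) := Finset.sum_le_sum hterm
      _ = (T2.card : ℝ) * (2 * (n:ℝ)) := by rw [Finset.sum_const, nsmul_eq_mul]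
      _ ≤ (c₁ * (c₄ * (n:ℝ) ^ dG)) * (2 * (n:ℝ)) := by
          apply mul_le_mul_of_nonneg_right hup (by positivity)
      _ = (2 * (c₁ * c₄)) * ((n:ℝ) * (n:ℝ) ^ dG) := by ring
      _ = (2 * (c₁ * c₄)) * (n:ℝ) ^ (1 + dG) := by
          rw [Real.rpow_add hnpos, Real.rpow_one]
    -- ### the gradient term
    set g : V → ℝ := fun x => Real.sqrt ((2 * (G.degree x) : ℝ)⁻¹ *
        ∑ y ∈ G.neighborFinset x, ‖f y - f x‖ ^ 2) with hgdef
    have hBfin : ({s : V | s ∈ S ∧ d s ≤ 2 * n}).Finite :=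
      hfin2.subset (fun y hy => hy.2)
    set TB : Finset V := hBfin.toFinset with hTB
    have hmemTB : ∀ x, x ∈ TB ↔ (x ∈ S ∧ d x ≤ 2 * n) := by
      intro x; simp [hTB]
    -- f is constant on fibres
    have hfproj : ∀ x y : V, π x = π y → f x = f y := by
      intro x y hxy
      simp only [hfdef]
      rw [show d x = d y from spinal_proj_eq hsp x₀ hxy]
    have hgzero : ∀ x ∉ TB, g x = 0 := by
      intro x hx
      rw [hmemTB] at hx
      push_neg at hx
      have hvan : ∀ y ∈ G.neighborFinset x, ‖f y - f x‖ ^ 2 = 0 := by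
        intro y hy
        rw [SimpleGraph.mem_neighborFinset] at hy
        rcases adj_dichotomy hsp hy with hpq | ⟨hxS, _, _⟩
        · rw [hfproj x y hpq]; simp
        · -- x ∈ S
          have hxmem : x ∈ S := hxS ▸ hsp.mem_spine x
          have hdx : 2 * n < d x := hx hxmem
          have hdy : 2 * n ≤ d y := by
            have := hlip y x hy.symm  -- d x ≤ d y + 1
            omega
          have hfx : f x = 0 := by
            simp only [hfdef]
            rw [show 2 * n - d x = 0 by omega]; simp
          have hfy : f y = 0 := by
            simp only [hfdef]
            rw [show 2 * n - d y = 0 by omega]; simp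
          rw [hfx, hfy]; simp
      have : ∑ y ∈ G.neighborFinset x, ‖f y - f x‖ ^ 2 = 0 :=
        Finset.sum_eq_zero hvan
      rw [hgdef]
      simp only [this, mul_zero, Real.sqrt_zero]
    have hgle1 : ∀ x, g x ≤ 1 := by
      intro x
      rw [hgdef]
      simp only
      have hterm : ∀ y ∈ G.neighborFinset x, ‖f y - f x‖ ^ 2 ≤ 1 := by
        intro y hy
        rw [SimpleGraph.mem_neighborFinset] at hy
        have h1 : d y ≤ d x + 1 := hlip x y hy
        have h2 : d x ≤ d y + 1 := hlip y x hy.symm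
        have hab : (2 * n - d y) ≤ (2 * n - d x) + 1 ∧ (2 * n - d x) ≤ (2 * n - d y) + 1 := by
          omega
        have hre : f y - f x = ((((2 * n - d y : ℕ) : ℝ) - ((2 * n - d x : ℕ) : ℝ) : ℝ) : ℂ) := by
          simp [hfdef]
        rw [hre, Complex.norm_real]
        have : |(((2 * n - d y : ℕ) : ℝ) - ((2 * n - d x : ℕ) : ℝ))| ≤ 1 := by
          rw [abs_sub_le_iff]
          constructor
          · have := hab.1
            have := (Nat.cast_le (α := ℝ)).2 hab.1
            push_cast at this ⊢
            linarith
          · have := (Nat.cast_le (α := ℝ)).2 hab.2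
            push_cast at this ⊢
            linarith
        calc |(((2 * n - d y : ℕ) : ℝ) - ((2 * n - d x : ℕ) : ℝ))| ^ 2
            ≤ 1 ^ 2 := by
              apply pow_le_pow_left₀ (abs_nonneg _) this
        _ = 1 := one_pow 2
      have hsum : ∑ y ∈ G.neighborFinset x, ‖f y - f x‖ ^ 2 ≤ (G.degree x : ℝ) := by
        calc ∑ y ∈ G.neighborFinset x, ‖f y - f x‖ ^ 2 ≤ ∑ _y ∈ G.neighborFinset x, (1:ℝ) :=
              Finset.sum_le_sum hterm
        _ = (G.degree x : ℝ) := by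
            rw [Finset.sum_const, nsmul_eq_mul, mul_one, SimpleGraph.card_neighborFinset_eq_degree]
      have hsumnonneg : 0 ≤ ∑ y ∈ G.neighborFinset x, ‖f y - f x‖ ^ 2 :=
        Finset.sum_nonneg (fun y _ => by positivity)
      rw [Real.sqrt_le_one]
      rcases Nat.eq_zero_or_pos (G.degree x) with h0 | hpos
      · have : ∑ y ∈ G.neighborFinset x, ‖f y - f x‖ ^ 2 = 0 := le_antisymm (by
          rw [h0] at hsum; exact_mod_cast hsum) hsumnonneg
        rw [this, mul_zero]
        norm_num
      · have hdegpos : (0:ℝ) < (G.degree x : ℝ) := by exact_mod_cast hpos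
        have hinv : (2 * (G.degree x : ℝ))⁻¹ = 1 / (2 * (G.degree x : ℝ)) := by
          rw [one_div]
        calc (2 * (G.degree x : ℝ))⁻¹ * ∑ y ∈ G.neighborFinset x, ‖f y - f x‖ ^ 2
            ≤ (2 * (G.degree x : ℝ))⁻¹ * (G.degree x : ℝ) := by
              apply mul_le_mul_of_nonneg_left hsum (by positivity)
        _ ≤ 1 := by
            rw [hinv]
            rw [div_mul_eq_mul_div, one_mul, div_le_one (by positivity)]
            linarith
    have hgnonneg : ∀ x, 0 ≤ g x := fun x => Real.sqrt_nonneg _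
    have hgrad_sum : (∑' x, g x ^ p) = ∑ x ∈ TB, g x ^ p := by
      apply tsum_eq_sum
      intro x hx
      rw [hgzero x hx]
      exact Real.zero_rpow (ne_of_gt hp0)
    have hup3 : ∑ x ∈ TB, g x ^ p ≤ c₂ * (n:ℝ) ^ dS := by
      have hterm : ∀ x ∈ TB, g x ^ p ≤ 1 := by
        intro x _
        exact Real.rpow_le_one (hgnonneg x) (hgle1 x) (le_of_lt hp0)
      have hcard : ({s : V | s ∈ S ∧ d s ≤ 2 * n}).ncard = TB.card :=
        Set.ncard_eq_toFinset_card _ hBfin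
      calc ∑ x ∈ TB, g x ^ p ≤ ∑ _x ∈ TB, (1:ℝ) := Finset.sum_le_sum hterm
      _ = (TB.card : ℝ) := by rw [Finset.sum_const, nsmul_eq_mul, mul_one]
      _ ≤ c₂ * (n:ℝ) ^ dS := by
          have h := hspine k
          have hcard' : ({s : V | s ∈ S ∧ spinalDist G S π hsp.mem_spine s x₀ ≤ 2 * nk k}).ncard = TB.card := hcard
          rw [hcard'] at h
          exact h
    -- ### apply the Nash inequality
    have hNashf := hNash f hsupp
    -- lower bound the LHS
    have hLHS : C₅ * (n:ℝ) ^ A ≤ ((∑' x, ‖f x‖ ^ p) ^ (1 / p)) ^ e₁ := by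
      have h1 : c₃ * (n:ℝ) ^ (dG + p) ≤ ∑' x, ‖f x‖ ^ p := by
        rw [hpow_sum]
        calc c₃ * (n:ℝ) ^ (dG + p) = c₃ * (n:ℝ) ^ dG * (n:ℝ) ^ p := by
              rw [Real.rpow_add hnpos]; ring
        _ ≤ ∑ x ∈ T2, ‖f x‖ ^ p := hlow1
      have h2 : (c₃ * (n:ℝ) ^ (dG + p)) ^ (1/p) ≤ (∑' x, ‖f x‖ ^ p) ^ (1/p) :=
        Real.rpow_le_rpow (by positivity) h1 (by positivity)
      have h3 : ((c₃ * (n:ℝ) ^ (dG + p)) ^ (1/p)) ^ e₁ ≤ ((∑' x, ‖f x‖ ^ p) ^ (1/p)) ^ e₁ :=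
        Real.rpow_le_rpow (by positivity) h2 (le_of_lt he₁pos)
      refine le_trans (le_of_eq ?_) h3
      have hnn : (0:ℝ) ≤ (n:ℝ) := le_of_lt hnpos
      rw [Real.mul_rpow (le_of_lt hc₃) (Real.rpow_nonneg hnn _),
          ← Real.rpow_mul hnn,
          Real.mul_rpow (Real.rpow_nonneg (le_of_lt hc₃) _) (Real.rpow_nonneg hnn _),
          ← Real.rpow_mul hnn]
    have hnn : (0:ℝ) ≤ (n:ℝ) := le_of_lt hnpos
    have hgradnn : (0:ℝ) ≤ ∑' x, (Real.sqrt ((2 * (G.degree x) : ℝ)⁻¹ *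
        ∑ y ∈ G.neighborFinset x, ‖f y - f x‖ ^ 2)) ^ p :=
      tsum_nonneg (fun x => Real.rpow_nonneg (Real.sqrt_nonneg _) p)
    have honenn : (0:ℝ) ≤ ∑' x, ‖f x‖ := tsum_nonneg (fun x => norm_nonneg _)
    have hg_eq : (∑' x, (Real.sqrt ((2 * (G.degree x) : ℝ)⁻¹ *
        ∑ y ∈ G.neighborFinset x, ‖f y - f x‖ ^ 2)) ^ p) = ∑ x ∈ TB, g x ^ p := hgrad_sum
    have hRHS : K * (∑' x, ‖f x‖) ^ e₂ *
          (∑' x, (Real.sqrt ((2 * (G.degree x) : ℝ)⁻¹ *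
            ∑ y ∈ G.neighborFinset x, ‖f y - f x‖ ^ 2)) ^ p) ^ (1 / p) ≤ C₆ * (n:ℝ) ^ B := by
      have hone_le : (∑' x, ‖f x‖) ≤ (2 * (c₁ * c₄)) * (n:ℝ) ^ (1 + dG) := by
        rw [hone_sum]; exact hup2
      have hgrad_le : (∑' x, (Real.sqrt ((2 * (G.degree x) : ℝ)⁻¹ *
          ∑ y ∈ G.neighborFinset x, ‖f y - f x‖ ^ 2)) ^ p) ≤ c₂ * (n:ℝ) ^ dS := by
        rw [hg_eq]; exact hup3
      have h1 : (∑' x, ‖f x‖) ^ e₂ ≤ ((2 * (c₁ * c₄)) * (n:ℝ) ^ (1 + dG)) ^ e₂ :=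
        Real.rpow_le_rpow honenn hone_le (le_of_lt hp'pos)
      have h2 : (∑' x, (Real.sqrt ((2 * (G.degree x) : ℝ)⁻¹ *
          ∑ y ∈ G.neighborFinset x, ‖f y - f x‖ ^ 2)) ^ p) ^ (1/p) ≤ (c₂ * (n:ℝ) ^ dS) ^ (1/p) :=
        Real.rpow_le_rpow hgradnn hgrad_le (by positivity)
      calc K * (∑' x, ‖f x‖) ^ e₂ *
            (∑' x, (Real.sqrt ((2 * (G.degree x) : ℝ)⁻¹ *
              ∑ y ∈ G.neighborFinset x, ‖f y - f x‖ ^ 2)) ^ p) ^ (1 / p)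
          ≤ (K * ((2 * (c₁ * c₄)) * (n:ℝ) ^ (1 + dG)) ^ e₂) * (c₂ * (n:ℝ) ^ dS) ^ (1/p) := by
            apply mul_le_mul (mul_le_mul_of_nonneg_left h1 (le_of_lt hK)) h2
              (Real.rpow_nonneg hgradnn _) (by positivity)
      _ = C₆ * (n:ℝ) ^ B := by
          rw [Real.mul_rpow (by positivity) (Real.rpow_nonneg hnn _), ← Real.rpow_mul hnn,
            Real.mul_rpow (le_of_lt hc₂) (Real.rpow_nonneg hnn _), ← Real.rpow_mul hnn,
            hC₆, hB, Real.rpow_add hnpos]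
          ring
    calc C₅ * (n:ℝ) ^ A ≤ ((∑' x, ‖f x‖ ^ p) ^ (1 / p)) ^ e₁ := hLHS
    _ ≤ K * (∑' x, ‖f x‖) ^ e₂ *
          (∑' x, (Real.sqrt ((2 * (G.degree x) : ℝ)⁻¹ *
            ∑ y ∈ G.neighborFinset x, ‖f y - f x‖ ^ 2)) ^ p) ^ (1 / p) := hNashf
    _ ≤ C₆ * (n:ℝ) ^ B := hRHS
  -- conclude A ≤ B from key, then algebra
  have hAB : A ≤ B := by
    by_contra hAB
    push_neg at hAB
    have hε : 0 < A - B := by linarith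
    have hbound : ∀ k : ℕ, 1 ≤ k → (k : ℝ) ^ (A - B) ≤ C₆ / C₅ := by
      intro k hk
      have hnk1 : 1 ≤ nk k := le_trans hk (hnk.le_apply)
      have hpos : (0 : ℝ) < (nk k : ℝ) := by exact_mod_cast hnk1
      have h1 : (k : ℝ) ^ (A - B) ≤ (nk k : ℝ) ^ (A - B) :=
        Real.rpow_le_rpow (by positivity) (by exact_mod_cast hnk.le_apply) (le_of_lt hε)
      have h2 := key k hnk1
      have h3 : (nk k : ℝ) ^ A = (nk k : ℝ) ^ B * (nk k : ℝ) ^ (A - B) := by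
        rw [← Real.rpow_add hpos]; ring_nf
      have hBpos : (0:ℝ) < (nk k : ℝ) ^ B := Real.rpow_pos_of_pos hpos B
      have h4 : (nk k : ℝ) ^ (A - B) ≤ C₆ / C₅ := by
        rw [h3] at h2
        rw [le_div_iff₀ hC₅pos]
        nlinarith
      linarith
    have htend : Filter.Tendsto (fun k : ℕ => (k : ℝ) ^ (A - B)) Filter.atTop Filter.atTop :=
      (tendsto_rpow_atTop hε).comp tendsto_natCast_atTop_atTop
    obtain ⟨k, hk1, hk2⟩ :=
      ((htend.eventually_gt_atTop (C₆ / C₅)).and (Filter.eventually_ge_atTop 1)).exists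
    exact absurd (hbound k hk2) (not_le.mpr hk1)
  -- final algebra
  have hpne : p ≠ 0 := ne_of_gt hp0
  have hp1ne : p - 1 ≠ 0 := ne_of_gt hp1
  have hβne : β ≠ 0 := ne_of_gt hβ
  have keyid : A - B = 1 + (dG - dS)/p - dG/β := by
    rw [hA, hB, he₁, he₂]
    field_simp
    ring
  have := sub_nonpos.mpr hAB
  rw [keyid] at this
  linarith
end

section
/- Let G be the spinal graph over Σ = ℕ obtained by gluing, at each n ∈ ℕ, the ball B_{P_n}(o_n, n^α) of a graph P_n satisfying c r^δ ≤ |B_{P_n}(x,r)| ≤ C r^δ (constants uniform in n), where δ > D > 1 and α = (D−1)/δ. Then for all n ∈ ℕ and all integers r ≥ 2, |B_G(n, r)| ≥ c' r^D for some constant c' > 0 independent of n and r. -/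
/-!
The spine vertex `n + k` is at distance `k` from the spine vertex `n`, and the fibre glued there
contains the ball of radius `⌊k ^ α⌋₊` of `P (n + k)` around `o (n + k)`, since
`k ^ α ≤ (n + k) ^ α`. For `2 k ≤ r` these balls lie in `B_G(n, r)` (as `⌊k ^ α⌋₊ ≤ k`), they are
pairwise disjoint, and each has at least `c ⌊k ^ α⌋₊ ^ δ ≥ c 2 ^ (-δ) k ^ (D - 1)` points because
`α δ = D - 1`. Summing over `1 ≤ k ≤ r / 2` gives a multiple of `r ^ D`.
-/

/-- The closed combinatorial ball of (real) radius `r` around `x`. -/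
def gball {V : Type*} (G : SimpleGraph V) (x : V) (r : ℝ) : Set V :=
  {y | (G.dist x y : ℝ) ≤ r}

/-- The vertices of the fibre glued at `n ∈ ℕ`: the ball `B_{P n}(o n, n ^ α)`. -/
def FibVert {W : ℕ → Type*} (P : ∀ n, SimpleGraph (W n)) (o : ∀ n, W n) (α : ℝ)
    (n : ℕ) : Type _ :=
  {z : W n // ((P n).dist (o n) z : ℝ) ≤ (n : ℝ) ^ α}

/-- The spinal graph over `Σ = ℕ` obtained by gluing, at each `n ∈ ℕ`, the induced
subgraph of `P n` on the ball `B_{P n}(o n, n ^ α)` to the vertex `n` of the path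
graph `ℕ` at the distinguished point `o n`. -/
def SpineGlued {W : ℕ → Type*} (P : ∀ n, SimpleGraph (W n)) (o : ∀ n, W n) (α : ℝ) :
    SimpleGraph (Σ n, FibVert P o α n) :=
  SimpleGraph.fromRel (fun p q =>
    (∃ h : p.1 = q.1, (P q.1).Adj (h ▸ p.2.1) q.2.1) ∨
    (p.2.1 = o p.1 ∧ q.2.1 = o q.1 ∧ q.1 = p.1 + 1))

theorem mem_gball {V : Type*} {G : SimpleGraph V} {x y : V} {r : ℝ} :
    y ∈ gball G x r ↔ (G.dist x y : ℝ) ≤ r :=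
  Iff.rfl

theorem Nat.le_two_mul_floor {R : Type*} [Semiring R] [LinearOrder R] [IsStrictOrderedRing R]
    [FloorSemiring R] {a : R} (ha : 1 ≤ a) : a ≤ 2 * ⌊a⌋₊ := by
  have h1 : (1 : R) ≤ ⌊a⌋₊ := by exact_mod_cast (Nat.one_le_floor_iff a).mpr ha
  calc a ≤ ⌊a⌋₊ + 1 := (Nat.lt_floor_add_one a).le
    _ ≤ 2 * ⌊a⌋₊ := by rw [two_mul]; exact add_le_add_right h1 _

/-- Only the terms with `r / 4 < k` are kept, each at least `(r / 4) ^ a`. -/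
theorem Real.rpow_add_one_div_le_sum_Icc {a : ℝ} (ha : 0 ≤ a) {r : ℕ} (hr : 2 ≤ r) :
    (r : ℝ) ^ (a + 1) / (8 * 4 ^ a) ≤ ∑ k ∈ Finset.Icc 1 (r / 2), (k : ℝ) ^ a := by
  have hterm (k : ℕ) (hk : k ∈ Finset.Ioc (r / 4) (r / 2)) : ((r : ℝ) / 4) ^ a ≤ (k : ℝ) ^ a := by
    rw [Finset.mem_Ioc] at hk
    gcongr
    rw [div_le_iff₀ (by norm_num)]
    exact_mod_cast (by omega : r ≤ k * 4)
  calc (r : ℝ) ^ (a + 1) / (8 * 4 ^ a) = (r : ℝ) / 8 * ((r : ℝ) / 4) ^ a := by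
        rw [Real.div_rpow (by positivity) (by norm_num), Real.rpow_add_one (by positivity)]
        ring
    _ ≤ (Finset.Ioc (r / 4) (r / 2)).card * ((r : ℝ) / 4) ^ a := by
        gcongr
        rw [Nat.card_Ioc, div_le_iff₀ (by norm_num)]
        exact_mod_cast (by omega : r ≤ (r / 2 - r / 4) * 8)
    _ ≤ ∑ k ∈ Finset.Ioc (r / 4) (r / 2), (k : ℝ) ^ a := by
        rw [← nsmul_eq_mul, ← Finset.sum_const]
        exact Finset.sum_le_sum hterm
    _ ≤ ∑ k ∈ Finset.Icc 1 (r / 2), (k : ℝ) ^ a :=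
        Finset.sum_le_sum_of_subset_of_nonneg
          (fun k hk => by simp only [Finset.mem_Ioc, Finset.mem_Icc] at hk ⊢; omega)
          (fun _ _ _ => by positivity)

theorem Set.sum_ncard_preimage_sigmaMk_le {ι : Type*} {β : ι → Type*} {s : Set (Σ i, β i)}
    (hs : s.Finite) (M : Finset ι) :
    ∑ i ∈ M, (Sigma.mk i ⁻¹' s).ncard ≤ s.ncard := by
  have hfib (i : ι) : (Sigma.mk i ⁻¹' s).Finite := hs.preimage sigma_mk_injective.injOn
  calc ∑ i ∈ M, (Sigma.mk i ⁻¹' s).ncard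
      = (M.sigma fun i => (hfib i).toFinset).card := by
        simp only [Finset.card_sigma, Set.ncard_eq_toFinset_card _ (hfib _)]
    _ ≤ hs.toFinset.card := Finset.card_le_card fun p hp => by simp_all
    _ = s.ncard := (Set.ncard_eq_toFinset_card s hs).symm

namespace SpineGlued

open SimpleGraph

variable {W : ℕ → Type*} (P : ∀ n, SimpleGraph (W n)) (o : ∀ n, W n) (α : ℝ)

def spine (m : ℕ) : Σ n, FibVert P o α n :=
  ⟨m, ⟨o m, by simp; positivity⟩⟩

theorem spine_adj_spine_succ (m : ℕ) :
    (SpineGlued P o α).Adj (spine P o α m) (spine P o α (m + 1)) := by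
  rw [SpineGlued, fromRel_adj]
  exact ⟨fun h => by simpa [spine] using congrArg Sigma.fst h, .inl (.inr ⟨rfl, rfl, rfl⟩)⟩

def fibreHom (m : ℕ) :
    (P m).induce {z | ((P m).dist (o m) z : ℝ) ≤ (m : ℝ) ^ α} →g SpineGlued P o α where
  toFun z := ⟨m, z⟩
  map_rel' {z z'} h := by
    rw [SpineGlued, fromRel_adj]
    exact ⟨fun he => h.ne (eq_of_heq (Sigma.mk.inj_iff.mp he).2), .inl (.inl ⟨rfl, h⟩)⟩

theorem exists_walk_spine_add (n k : ℕ) :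
    ∃ w : (SpineGlued P o α).Walk (spine P o α n) (spine P o α (n + k)), w.length = k := by
  induction k with
  | zero => exact ⟨.nil, rfl⟩
  | succ k ih =>
    obtain ⟨w, hw⟩ := ih
    exact ⟨w.concat (spine_adj_spine_succ P o α (n + k)), by rw [Walk.length_concat, hw]⟩

variable {P o α}

/-- A geodesic of `P m` from `o m` stays in the ball `B(o m, m ^ α)`, hence in the glued fibre. -/
theorem exists_walk_spine_fibre {m : ℕ} (hconn : (P m).Connected) (z : FibVert P o α m) :
    ∃ w : (SpineGlued P o α).Walk (spine P o α m) ⟨m, z⟩, w.length = (P m).dist (o m) z.1 := by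
  classical
  obtain ⟨w, hw⟩ := hconn.exists_walk_length_eq_dist (o m) z.1
  have hsupp : ∀ x ∈ w.support, x ∈ {z | ((P m).dist (o m) z : ℝ) ≤ (m : ℝ) ^ α} := by
    intro x hx
    refine le_trans ?_ z.2
    rw [← hw]
    exact_mod_cast (dist_le (w.takeUntil x hx)).trans (w.length_takeUntil_le_length hx)
  have hlen := congrArg Walk.length (w.map_induce hsupp)
  rw [Walk.length_map] at hlen
  exact ⟨(w.induce _ hsupp).map (fibreHom P o α m), (w.induce _ hsupp).length_map _ ▸ hlen.trans hw⟩

theorem dist_spine_le {n k : ℕ} (hconn : (P (n + k)).Connected) (z : FibVert P o α (n + k)) :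
    (SpineGlued P o α).dist (spine P o α n) ⟨n + k, z⟩ ≤
      k + (P (n + k)).dist (o (n + k)) z.1 := by
  obtain ⟨w₁, hw₁⟩ := exists_walk_spine_add P o α n k
  obtain ⟨w₂, hw₂⟩ := exists_walk_spine_fibre hconn z
  simpa only [Walk.length_append, hw₁, hw₂] using dist_le (w₁.append w₂)

theorem connected (hconn : ∀ n, (P n).Connected) : (SpineGlued P o α).Connected := by
  refine connected_iff_exists_forall_reachable _ |>.mpr ⟨spine P o α 0, ?_⟩
  rintro ⟨m, z⟩
  obtain ⟨w₁, -⟩ := exists_walk_spine_add P o α 0 m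
  obtain ⟨w₂, -⟩ := exists_walk_spine_fibre (hconn m) z
  rw [Nat.zero_add] at w₁
  exact ⟨w₁.append w₂⟩

theorem fst_le_fst_add_length {p q : Σ n, FibVert P o α n} (w : (SpineGlued P o α).Walk p q) :
    q.1 ≤ p.1 + w.length := by
  induction w with
  | nil => simp
  | cons h _ ih =>
    rw [SpineGlued, fromRel_adj] at h
    rw [Walk.length_cons]
    rcases h.2 with (⟨he, _⟩ | ⟨_, _, he⟩) | (⟨he, _⟩ | ⟨_, _, he⟩) <;> omega

theorem finite_fibVert {m : ℕ} {δ c : ℝ} (hc : 0 < c)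
    (hvol : ∀ r : ℕ, 1 ≤ r → c * (r : ℝ) ^ δ ≤ (gball (P m) (o m) r).ncard) :
    Finite (FibVert P o α m) := by
  set R := ⌈(m : ℝ) ^ α⌉₊ + 1
  have hR : (m : ℝ) ^ α ≤ R := by push_cast [R]; linarith [Nat.le_ceil ((m : ℝ) ^ α)]
  have hfin : (gball (P m) (o m) R).Finite := Set.finite_of_ncard_pos <| by
    exact_mod_cast (by positivity : 0 < c * (R : ℝ) ^ δ).trans_le (hvol R le_add_self)
  exact (hfin.subset fun z (hz : _ ≤ _) => mem_gball.mpr (hz.trans hR)).to_subtype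

theorem finite_gball [∀ m, Finite (FibVert P o α m)] (hconn : ∀ n, (P n).Connected)
    (p : Σ n, FibVert P o α n) (r : ℕ) : (gball (SpineGlued P o α) p r).Finite := by
  refine ((Set.finite_Iic (p.1 + r)).biUnion fun m _ => Set.finite_range (Sigma.mk m)).subset ?_
  intro q hq
  obtain ⟨w, hw⟩ := (connected hconn).exists_walk_length_eq_dist p q
  have hqr : w.length ≤ r := by rw [hw]; exact_mod_cast mem_gball.mp hq
  have hqm : q.1 ≤ p.1 + r := (fst_le_fst_add_length w).trans (by omega)
  exact Set.mem_biUnion (Set.mem_Iic.mpr hqm) ⟨q.2, rfl⟩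

theorem ncard_gball_le_ncard_fibre {n k ρ r : ℕ} (hconn : (P (n + k)).Connected)
    (hρα : (ρ : ℝ) ≤ ((n + k : ℕ) : ℝ) ^ α) (hρr : k + ρ ≤ r)
    (hfin : (gball (SpineGlued P o α) (spine P o α n) r).Finite) :
    (gball (P (n + k)) (o (n + k)) ρ).ncard ≤
      (Sigma.mk (n + k) ⁻¹' gball (SpineGlued P o α) (spine P o α n) r).ncard := by
  have hpre := hfin.preimage (sigma_mk_injective (i := n + k)).injOn
  have hsub : gball (P (n + k)) (o (n + k)) ρ ⊆
      Subtype.val '' (Sigma.mk (β := FibVert P o α) (n + k) ⁻¹'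
        gball (SpineGlued P o α) (spine P o α n) r) := by
    intro y hy
    have hyρ : (P (n + k)).dist (o (n + k)) y ≤ ρ := by exact_mod_cast mem_gball.mp hy
    refine ⟨⟨y, hy.trans hρα⟩, mem_gball.mpr ?_, rfl⟩
    exact_mod_cast ((dist_spine_le hconn ⟨y, hy.trans hρα⟩).trans
      (Nat.add_le_add_left hyρ k)).trans hρr
  exact (Set.ncard_le_ncard hsub (hpre.image _)).trans (Set.ncard_image_le hpre)

section VolumeGrowth

variable {δ c : ℝ} (hconn : ∀ n, (P n).Connected) (hα₀ : 0 ≤ α) (hα₁ : α ≤ 1) (hδ : 0 ≤ δ)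
  (hc : 0 ≤ c)
  (hvol : ∀ (m : ℕ) (x : W m) (r : ℕ), 1 ≤ r → c * (r : ℝ) ^ δ ≤ (gball (P m) x r).ncard)
include hconn hα₀ hα₁ hδ hc hvol

theorem le_ncard_fibre {n r : ℕ} (hfin : (gball (SpineGlued P o α) (spine P o α n) r).Finite)
    {k : ℕ} (hk : 1 ≤ k) (hkr : 2 * k ≤ r) :
    c / 2 ^ δ * (k : ℝ) ^ (α * δ) ≤
      (Sigma.mk (n + k) ⁻¹' gball (SpineGlued P o α) (spine P o α n) r).ncard := by
  have hk' : (1 : ℝ) ≤ k := by exact_mod_cast hk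
  have hkα : 1 ≤ (k : ℝ) ^ α := Real.one_le_rpow hk' hα₀
  set ρ := ⌊(k : ℝ) ^ α⌋₊
  have hρ : (ρ : ℝ) ≤ (k : ℝ) ^ α := Nat.floor_le (by positivity)
  have hρk : ρ ≤ k := by exact_mod_cast hρ.trans (Real.rpow_le_self_of_one_le hk' hα₁)
  have hρα : (ρ : ℝ) ≤ ((n + k : ℕ) : ℝ) ^ α :=
    hρ.trans (Real.rpow_le_rpow (by positivity) (by exact_mod_cast k.le_add_left n) hα₀)
  calc c / 2 ^ δ * (k : ℝ) ^ (α * δ)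
      = c * (((k : ℝ) ^ α) ^ δ / 2 ^ δ) := by rw [Real.rpow_mul (by positivity)]; ring
    _ ≤ c * (ρ : ℝ) ^ δ := by
        gcongr
        rw [div_le_iff₀ (by positivity), ← Real.mul_rpow (by positivity) (by norm_num), mul_comm]
        exact Real.rpow_le_rpow (by positivity) (Nat.le_two_mul_floor hkα) hδ
    _ ≤ (gball (P (n + k)) (o (n + k)) ρ).ncard :=
        hvol _ _ _ ((Nat.one_le_floor_iff _).mpr hkα)
    _ ≤ _ := by exact_mod_cast ncard_gball_le_ncard_fibre (hconn _) hρα (by omega) hfin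

theorem sum_le_ncard_gball [∀ m, Finite (FibVert P o α m)] (n r : ℕ) :
    ∑ k ∈ Finset.Icc 1 (r / 2), c / 2 ^ δ * (k : ℝ) ^ (α * δ) ≤
      (gball (SpineGlued P o α) (spine P o α n) r).ncard := by
  have hfin := finite_gball hconn (spine P o α n) r
  calc ∑ k ∈ Finset.Icc 1 (r / 2), c / 2 ^ δ * (k : ℝ) ^ (α * δ)
      ≤ ∑ k ∈ Finset.Icc 1 (r / 2),
          ((Sigma.mk (n + k) ⁻¹' gball (SpineGlued P o α) (spine P o α n) r).ncard : ℝ) :=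
        Finset.sum_le_sum fun k hk => by
          rw [Finset.mem_Icc] at hk
          exact le_ncard_fibre hconn hα₀ hα₁ hδ hc hvol hfin hk.1 (by omega)
    _ ≤ (gball (SpineGlued P o α) (spine P o α n) r).ncard := by
        have := Set.sum_ncard_preimage_sigmaMk_le hfin
          ((Finset.Icc 1 (r / 2)).map (addLeftEmbedding n))
        rw [Finset.sum_map] at this
        exact_mod_cast this

end VolumeGrowth

end SpineGlued

theorem stmt_17 {W : ℕ → Type*} (P : ∀ n, SimpleGraph (W n)) (o : ∀ n, W n)
    (hconn : ∀ n, (P n).Connected)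
    (δ D α : ℝ) (hD : 1 < D) (hδ : D < δ) (hα : α = (D - 1) / δ)
    (c C : ℝ) (hc : 0 < c)
    (hvol : ∀ (n : ℕ) (x : W n) (r : ℕ), 1 ≤ r →
      c * (r : ℝ) ^ δ ≤ ((gball (P n) x r).ncard : ℝ) ∧
        ((gball (P n) x r).ncard : ℝ) ≤ C * (r : ℝ) ^ δ) :
    ∃ c' : ℝ, 0 < c' ∧ ∀ (n : ℕ) (r : ℕ), 2 ≤ r →
      c' * (r : ℝ) ^ D ≤
        ((gball (SpineGlued P o α)
            ⟨n, ⟨o n, by simp [SimpleGraph.dist_self]; positivity⟩⟩ (r : ℝ)).ncard : ℝ) := by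
  have hδ₀ : 0 < δ := by linarith
  have hαδ : α * δ = D - 1 := by rw [hα]; field_simp
  have hα₀ : 0 ≤ α := by rw [hα]; exact div_nonneg (by linarith) hδ₀.le
  have hα₁ : α ≤ 1 := by rw [hα, div_le_one hδ₀]; linarith
  have hvol₁ := fun m x r hr => (hvol m x r hr).1
  have (m : ℕ) : Finite (FibVert P o α m) :=
    SpineGlued.finite_fibVert hc fun r hr => hvol₁ m (o m) r hr
  refine ⟨c / 2 ^ δ / (8 * 4 ^ (D - 1)), by positivity, fun n r hr => ?_⟩
  calc c / 2 ^ δ / (8 * 4 ^ (D - 1)) * (r : ℝ) ^ D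
      = c / 2 ^ δ * ((r : ℝ) ^ (D - 1 + 1) / (8 * 4 ^ (D - 1))) := by ring_nf
    _ ≤ c / 2 ^ δ * ∑ k ∈ Finset.Icc 1 (r / 2), (k : ℝ) ^ (D - 1) := by
        gcongr
        exact Real.rpow_add_one_div_le_sum_Icc (by linarith) hr
    _ ≤ _ := by
        rw [Finset.mul_sum, ← hαδ]
        exact SpineGlued.sum_le_ncard_gball hconn hα₀ hα₁ hδ₀.le hc.le hvol₁ n r
end
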